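/- arXiv:2008.07594 — 2 statements merged into one kernel-verified Lean document; each statement's English description precedes it below -/
import Mathlib

section
/- For every integer N ≥ 2 and all positive integers d and m with m ≥ 2 and d² ≥ N·(2 + m·(m−1)), one has d/m ≥ min{⌈√(4N)⌉/2, ⌈√(8N)⌉/3, ⌈√(14N)⌉/4, ⌈√(22N)⌉/5, ⌈√(32N)⌉/6, ⌈√(44N)⌉/7} (as real numbers). -/
/-!
Write `a m = 2 + m (m - 1)`. Since `d ≥ ⌈√(a m N)⌉`, the term of index `m` works when `m ≤ 7`.
For `m ≥ 8` it suffices to find `p / q ≥ ⌈√(a k N)⌉ / k` with `k ≤ 7` such that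
`(p m - 1)² < q² N a m` for all `m ≥ 8`: then `(p m - 1)² < (q d)²`, so integrality gives
`p m ≤ q d`. For `N ≥ 200` the fraction `⌈√(14 N)⌉ / 4` does it; for smaller `N` some reduced
fraction `⌈√(a k N)⌉ / k` does, which is checked by computation.
-/

/-- `⌈√n⌉` for `n ≥ 1` (but `ceilSqrt 0 = 1`). -/
def ceilSqrt (n : ℕ) : ℕ := Nat.sqrt (n - 1) + 1

theorem le_ceilSqrt_sq (n : ℕ) : n ≤ ceilSqrt n ^ 2 := by
  have := Nat.lt_succ_sqrt' (n - 1)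
  rw [ceilSqrt, ← Nat.succ_eq_add_one]
  omega

theorem ceilSqrt_sub_one_sq_lt {n : ℕ} (hn : 0 < n) : (ceilSqrt n - 1) ^ 2 < n := by
  have := Nat.sqrt_le' (n - 1)
  rw [ceilSqrt, Nat.add_sub_cancel]
  omega

/-- `p / q ≤ d / m` whenever `m ≥ 8` and `d² ≥ N (2 + m (m - 1))`: the three conditions say that
`Q(m) = q² N (m² - m + 2) - (p m - 1)²` has nonnegative leading coefficient, nonnegative slope at
`m = 8` and positive value at `m = 8`. -/
def SlopeCertificate (N p q : ℕ) : Prop :=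
  p ^ 2 ≤ q ^ 2 * N ∧ 16 * p ^ 2 ≤ 15 * q ^ 2 * N + 2 * p ∧
    64 * p ^ 2 + 2 ≤ 58 * q ^ 2 * N + 16 * p

instance (N p q : ℕ) : Decidable (SlopeCertificate N p q) := by
  unfold SlopeCertificate; infer_instance

namespace SlopeCertificate

variable {N p q : ℕ}

theorem den_pos (h : SlopeCertificate N p q) : 0 < q := by
  obtain ⟨-, -, h⟩ := h
  refine Nat.pos_of_ne_zero ?_
  rintro rfl
  nlinarith

theorem sub_one_sq_lt (h : SlopeCertificate N p q) {m : ℤ} (hm : 8 ≤ m) :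
    ((p : ℤ) * m - 1) ^ 2 < q ^ 2 * N * (2 + m * (m - 1)) := by
  obtain ⟨h₀, h₁, h₂⟩ := h
  zify at h₀ h₁ h₂
  nlinarith [mul_nonneg (sub_nonneg.2 h₀) (sq_nonneg (m - 8)),
    mul_nonneg (by linarith : (0 : ℤ) ≤ 15 * q ^ 2 * N + 2 * p - 16 * p ^ 2) (sub_nonneg.2 hm)]

theorem mul_le_mul_of_le_sq {m d : ℕ} (h : SlopeCertificate N p q) (hm : 8 ≤ m)
    (hd : (2 + m * (m - 1)) * N ≤ d ^ 2) : p * m ≤ q * d := by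
  have hlt : ((p : ℤ) * m - 1) ^ 2 < (q * d : ℤ) ^ 2 := by
    have hd' : (2 + m * (m - 1) : ℤ) * N ≤ d ^ 2 := by
      have := (Nat.cast_le (α := ℤ)).2 hd
      push_cast [Nat.cast_sub (by omega : 1 ≤ m)] at this
      exact this
    calc ((p : ℤ) * m - 1) ^ 2 < q ^ 2 * N * (2 + m * (m - 1)) :=
          h.sub_one_sq_lt (by exact_mod_cast hm)
      _ ≤ (q * d : ℤ) ^ 2 := by nlinarith
  have := lt_of_pow_lt_pow_left₀ 2 (by positivity) hlt
  omega

end SlopeCertificate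

theorem slopeCertificate_ceilSqrt_four {N : ℕ} (hN : 200 ≤ N) :
    SlopeCertificate N (ceilSqrt (14 * N)) 4 := by
  obtain ⟨r, hr⟩ : ∃ r, ceilSqrt (14 * N) = r + 1 := ⟨_, rfl⟩
  have hr2 : r ^ 2 < 14 * N := by simpa [hr] using ceilSqrt_sub_one_sq_lt (n := 14 * N) (by omega)
  have hr_le : 7 * r ≤ 2 * N := by nlinarith
  refine ⟨?_, ?_, ?_⟩ <;> rw [hr] <;> nlinarith

theorem exists_slopeCertificate_of_lt_200 :
    ∀ N < 200, 2 ≤ N → ∃ k < 8, 2 ≤ k ∧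
      let c := ceilSqrt ((2 + k * (k - 1)) * N)
      SlopeCertificate N (c / c.gcd k) (k / c.gcd k) := by
  decide +kernel

theorem exists_slopeCertificate {N : ℕ} (hN : 2 ≤ N) : ∃ k, 2 ≤ k ∧ k ≤ 7 ∧
    ∃ p q, SlopeCertificate N p q ∧ ceilSqrt ((2 + k * (k - 1)) * N) * q ≤ k * p := by
  rcases lt_or_ge N 200 with hN' | hN'
  · obtain ⟨k, hk7, hk2, hcert⟩ := exists_slopeCertificate_of_lt_200 N hN' hN
    refine ⟨k, hk2, by omega, _, _, hcert, le_of_eq ?_⟩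
    rw [← Nat.mul_div_assoc _ (Nat.gcd_dvd_right _ _), ← Nat.mul_div_assoc _ (Nat.gcd_dvd_left _ _),
      mul_comm]
  · exact ⟨4, by norm_num, by norm_num, _, 4, slopeCertificate_ceilSqrt_four hN',
      le_of_eq (mul_comm _ _)⟩

theorem exists_ceilSqrt_mul_le {N m d : ℕ} (hN : 2 ≤ N) (hm : 2 ≤ m)
    (hd : (2 + m * (m - 1)) * N ≤ d ^ 2) :
    ∃ k, 2 ≤ k ∧ k ≤ 7 ∧ ∃ c, (2 + k * (k - 1)) * N ≤ c ^ 2 ∧ c * m ≤ k * d := by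
  rcases le_or_gt m 7 with hm7 | hm8
  · exact ⟨m, hm, hm7, d, hd, le_of_eq (mul_comm _ _)⟩
  obtain ⟨k, hk2, hk7, p, q, hcert, hpq⟩ := exists_slopeCertificate hN
  refine ⟨k, hk2, hk7, _, le_ceilSqrt_sq _, ?_⟩
  have hq := hcert.den_pos
  have hpm := hcert.mul_le_mul_of_le_sq hm8 hd
  refine le_of_mul_le_mul_right ?_ hq
  set c := ceilSqrt ((2 + k * (k - 1)) * N)
  calc c * m * q = c * q * m := by ring
    _ ≤ k * p * m := Nat.mul_le_mul_right _ hpq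
    _ ≤ k * (q * d) := by rw [mul_assoc]; exact Nat.mul_le_mul_left _ hpm
    _ = k * d * q := by ring

theorem ceil_sqrt_div_le_div {x : ℝ} {c k d m : ℕ} (hx : x ≤ c ^ 2) (hcm : c * m ≤ k * d)
    (hk : 0 < k) (hm : 0 < m) : (⌈√x⌉ : ℝ) / k ≤ d / m := by
  have hc : (⌈√x⌉ : ℝ) ≤ c := by
    exact_mod_cast Int.ceil_le.2 (by exact_mod_cast Real.sqrt_le_left (Nat.cast_nonneg c) |>.2 hx)
  rw [div_le_div_iff₀ (by positivity) (by positivity)]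
  calc (⌈√x⌉ : ℝ) * m ≤ c * m := by gcongr
    _ ≤ d * k := by exact_mod_cast hcm.trans_eq (mul_comm _ _)

theorem stmt_0_general (N : ℤ) (hN : 2 ≤ N) (d m : ℕ)
    (hm2 : 2 ≤ m) (hdm : (d : ℤ)^2 ≥ N * (2 + m * (m - 1))) :
    (d : ℝ) / m ≥
      min ((⌈Real.sqrt (4 * N)⌉ : ℝ) / 2)
        (min ((⌈Real.sqrt (8 * N)⌉ : ℝ) / 3)
          (min ((⌈Real.sqrt (14 * N)⌉ : ℝ) / 4)
            (min ((⌈Real.sqrt (22 * N)⌉ : ℝ) / 5)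
              (min ((⌈Real.sqrt (32 * N)⌉ : ℝ) / 6)
                ((⌈Real.sqrt (44 * N)⌉ : ℝ) / 7))))) := by
  lift N to ℕ using by omega
  have hd : (2 + m * (m - 1)) * N ≤ d ^ 2 := by
    zify [(by omega : 1 ≤ m)]
    linarith
  obtain ⟨k, hk2, hk7, c, hc, hcm⟩ := exists_ceilSqrt_mul_le (by omega) hm2 hd
  have hk := ceil_sqrt_div_le_div (x := ((2 + k * (k - 1)) * N : ℕ)) (by exact_mod_cast hc) hcm
    (by omega) (by omega)
  push_cast
  simp only [ge_iff_le, min_le_iff]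
  interval_cases k <;>
    simp only [Nat.reduceSub, Nat.reduceMul, Nat.reduceAdd, Nat.cast_mul, Nat.cast_ofNat] at hk <;>
    tauto

theorem stmt_0 (N : ℤ) (hN : 2 ≤ N) (d m : ℕ) (hd : 0 < d) (hm : 0 < m)
    (hm2 : 2 ≤ m) (hdm : (d : ℤ)^2 ≥ N * (2 + m * (m - 1))) :
    (d : ℝ) / m ≥
      min ((⌈Real.sqrt (4 * N)⌉ : ℝ) / 2)
        (min ((⌈Real.sqrt (8 * N)⌉ : ℝ) / 3)
          (min ((⌈Real.sqrt (14 * N)⌉ : ℝ) / 4)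
            (min ((⌈Real.sqrt (22 * N)⌉ : ℝ) / 5)
              (min ((⌈Real.sqrt (32 * N)⌉ : ℝ) / 6)
                ((⌈Real.sqrt (44 * N)⌉ : ℝ) / 7))))) :=
  stmt_0_general N hN d m hm2 hdm
end

section
/- For every real number N ≥ 1072 and every real number m ≥ 8, one has √(N·(2 + m·(m−1)))/m ≥ √(44N)/7 + 1/7. -/
/-! Writing `√(N·(2 + m(m-1)))/m = √(N·(1 - 1/m + 2/m²))`, the left-hand side is increasing
in `m ≥ 4`, so it suffices to treat `m = 8`, i.e. `√(44N)/7 + 1/7 ≤ √(58N)/8`. Squaring reduces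
this to `128·√(44N) + 64 ≤ 26N`, and squaring once more to `169N² - 181056N + 1024 ≥ 0`,
whose larger root lies just below `1072`. -/

open Real

lemma quadratic_div_sq_le {k m : ℝ} (hk : 4 ≤ k) (hkm : k ≤ m) :
    (2 + k * (k - 1)) / k ^ 2 ≤ (2 + m * (m - 1)) / m ^ 2 := by
  rw [div_le_div_iff₀ (by positivity) (by nlinarith)]
  -- the difference of the cross products is `(m - k)((m - 2)(k - 2) - 4)`
  nlinarith [mul_nonneg (sub_nonneg.2 hkm)
    (by nlinarith : (0 : ℝ) ≤ (m - 2) * (k - 2) - 4)]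

lemma sqrt_mul_div_eq_sqrt_mul_div_sq (N q : ℝ) {m : ℝ} (hm : 0 < m) :
    √(N * q) / m = √(N * (q / m ^ 2)) := by
  rw [← mul_div_assoc, sqrt_div' _ (sq_nonneg m), sqrt_sq hm.le]

lemma monotoneOn_sqrt_mul_quadratic_div {N : ℝ} (hN : 0 ≤ N) :
    MonotoneOn (fun m : ℝ => √(N * (2 + m * (m - 1))) / m) (Set.Ici 4) := by
  intro k hk m hm hkm
  simp only [Set.mem_Ici] at hk hm
  dsimp only
  rw [sqrt_mul_div_eq_sqrt_mul_div_sq _ _ (by linarith),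
    sqrt_mul_div_eq_sqrt_mul_div_sq _ _ (by linarith)]
  exact sqrt_le_sqrt (mul_le_mul_of_nonneg_left (quadratic_div_sq_le hk hkm) hN)

lemma sqrt_mul_44_le {N : ℝ} (hN : 1072 ≤ N) : 128 * √(44 * N) + 64 ≤ 26 * N := by
  have hsqrt : √(44 * N) ≤ (26 * N - 64) / 128 :=
    (sqrt_le_left (by linarith)).2 (by nlinarith)
  linarith

lemma sqrt_mul_44_div_seven_add_le {N : ℝ} (hN : 1072 ≤ N) :
    √(44 * N) / 7 + 1 / 7 ≤ √(N * (2 + 8 * (8 - 1))) / 8 := by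
  have hsq : √(44 * N) ^ 2 = 44 * N := sq_sqrt (by linarith)
  have hle : (√(44 * N) + 1) * 8 / 7 ≤ √(N * (2 + 8 * (8 - 1))) :=
    (le_sqrt (by positivity) (by nlinarith)).2 (by nlinarith [sqrt_mul_44_le hN])
  linarith

theorem stmt_4 (N m : ℝ) (hN : 1072 ≤ N) (hm : 8 ≤ m) :
    Real.sqrt (N * (2 + m * (m - 1))) / m ≥ Real.sqrt (44 * N) / 7 + 1 / 7 :=
  (sqrt_mul_44_div_seven_add_le hN).trans <|
    monotoneOn_sqrt_mul_quadratic_div (by linarith) (by norm_num : (8 : ℝ) ∈ Set.Ici 4)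
      (by simp only [Set.mem_Ici]; linarith) hm
end
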